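/- With cutoffs fixed, the optimal deception of a student is non-decreasing in the level of manipulability w: if a student optimally deceives under manipulability level w₀, and manipulability increases to w₁ > w₀ (so that any priority achieved by deception under w₀ that exceeds the null-action priority is weakly increased), then the student still optimally deceives under w₁. -/
import Mathlib


/-- Optimal deception is non-decreasing in the level of manipulability `w`.
Setup: schools `S`, actions `A` with null action `a0`; priority at school `s`
under weight `w` and action `a` is `w * pman s a + (1 - w) * pexog s`; the
null action has manipulable priority equal to the exogenous one, and
deception weakly raises the manipulable priority.  "Optimally deceives under
`w`": there is a school `s` reachable by some deceptive action whose net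
utility `v s - γ` is positive and strictly exceeds the utility of every
school affordable with the null action.  If the student optimally deceives
under `w₀` and `w₀ < w₁`, she optimally deceives under `w₁`. -/
theorem stmt_6 {S A : Type*} (a0 : A)
    (pman : S → A → ℝ) (pexog : S → ℝ) (P : S → ℝ) (v : S → ℝ) (γ : ℝ)
    (hγ : 0 < γ)
    (hbound : ∀ s a, pman s a ∈ Set.Icc (0 : ℝ) 1)
    (hexog : ∀ s, pexog s ∈ Set.Icc (0 : ℝ) 1)
    (hnull : ∀ s, pman s a0 = pexog s)
    (hraise : ∀ s a, pman s a0 ≤ pman s a)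
    (w₀ w₁ : ℝ)
    (hw₀ : w₀ ∈ Set.Icc (0 : ℝ) 1) (hw₁ : w₁ ∈ Set.Icc (0 : ℝ) 1)
    (hlt : w₀ < w₁)
    (hopt : ∃ s, ∃ a, a ≠ a0 ∧
      w₀ * pman s a + (1 - w₀) * pexog s ≥ P s ∧
      v s - γ > 0 ∧
      ∀ s', w₀ * pman s' a0 + (1 - w₀) * pexog s' ≥ P s' →
        v s - γ > v s') :
    ∃ s, ∃ a, a ≠ a0 ∧
      w₁ * pman s a + (1 - w₁) * pexog s ≥ P s ∧
      v s - γ > 0 ∧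
      ∀ s', w₁ * pman s' a0 + (1 - w₁) * pexog s' ≥ P s' →
        v s - γ > v s' := by
  obtain ⟨s, a, hne, hP, hv, hall⟩ := hopt
  refine ⟨s, a, hne, ?_, hv, ?_⟩
  · calc P s ≤ w₀ * pman s a + (1 - w₀) * pexog s := hP
    _ ≤ w₁ * pman s a + (1 - w₁) * pexog s := by
        have h1 : pexog s ≤ pman s a := (hnull s) ▸ hraise s a
        nlinarith
  · intro s' hs'
    apply hall
    have h0 : pman s' a0 = pexog s' := hnull s'
    nlinarith [hs']
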